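/- arXiv:1603.02335 — 2 statements merged into one kernel-verified Lean document; each statement's English description precedes it below -/
import Mathlib

section
/- Let q : [t₁−τ,t₂] → ℝⁿ be an admissible C² function that minimizes J^τ, i.e. J^τ[q] ≤ J^τ[q̂] for every admissible C² function q̂. Then q satisfies the Euler–Lagrange equations with time delay: (i) for all t ∈ [t₁, t₂−τ], d/dt(∂₃L[q]_τ(t) + ∂₅L[q]_τ(t+τ)) = ∂₂L[q]_τ(t) + ∂₄L[q]_τ(t+τ); and (ii) for all t ∈ [t₂−τ, t₂], d/dt ∂₃L[q]_τ(t) = ∂₂L[q]_τ(t). -/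
open Set MeasureTheory RealInnerProductSpace

noncomputable section

/-- `ℝⁿ` as a Euclidean space. -/
abbrev Vec (n : ℕ) := EuclideanSpace ℝ (Fin n)

/-- The type of Lagrangians `L(t, q, q̇, q_τ, q̇_τ)`. -/
abbrev Lag (n : ℕ) := ℝ → Vec n → Vec n → Vec n → Vec n → ℝ

/-- `∂₁L[q]_τ(t)`: partial derivative of `L` w.r.t. its first (time) argument,
evaluated along `[q]_τ(t) = (t, q(t), q̇(t), q(t-τ), q̇(t-τ))`. -/
def dL1 {n : ℕ} (L : Lag n) (τ : ℝ) (q : ℝ → Vec n) (t : ℝ) : ℝ :=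
  deriv (fun s => L s (q t) (deriv q t) (q (t - τ)) (deriv q (t - τ))) t

/-- `∂₂L[q]_τ(t)` (a gradient, i.e. a vector in `ℝⁿ`). -/
def dL2 {n : ℕ} (L : Lag n) (τ : ℝ) (q : ℝ → Vec n) (t : ℝ) : Vec n :=
  gradient (fun y => L t y (deriv q t) (q (t - τ)) (deriv q (t - τ))) (q t)

/-- `∂₃L[q]_τ(t)`. -/
def dL3 {n : ℕ} (L : Lag n) (τ : ℝ) (q : ℝ → Vec n) (t : ℝ) : Vec n :=
  gradient (fun v => L t (q t) v (q (t - τ)) (deriv q (t - τ))) (deriv q t)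

/-- `∂₄L[q]_τ(t)`. -/
def dL4 {n : ℕ} (L : Lag n) (τ : ℝ) (q : ℝ → Vec n) (t : ℝ) : Vec n :=
  gradient (fun y => L t (q t) (deriv q t) y (deriv q (t - τ))) (q (t - τ))

/-- `∂₅L[q]_τ(t)`. -/
def dL5 {n : ℕ} (L : Lag n) (τ : ℝ) (q : ℝ → Vec n) (t : ℝ) : Vec n :=
  gradient (fun v => L t (q t) (deriv q t) (q (t - τ)) v) (deriv q (t - τ))

/-- `L[q]_τ(t)`: the Lagrangian evaluated along the delayed trajectory. -/
def lagAlong {n : ℕ} (L : Lag n) (τ : ℝ) (q : ℝ → Vec n) (t : ℝ) : ℝ :=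
  L t (q t) (deriv q t) (q (t - τ)) (deriv q (t - τ))

/-- The delayed functional `J^τ[q] = ∫_{t₁}^{t₂} L[q]_τ(t) dt`. -/
def Jτ {n : ℕ} (L : Lag n) (t₁ t₂ τ : ℝ) (q : ℝ → Vec n) : ℝ :=
  ∫ t in t₁..t₂, lagAlong L τ q t

/-- `L` is `C²` in all of its arguments (jointly). -/
def LagC2 {n : ℕ} (L : Lag n) : Prop :=
  ContDiff ℝ 2 (fun p : ℝ × Vec n × Vec n × Vec n × Vec n =>
    L p.1 p.2.1 p.2.2.1 p.2.2.2.1 p.2.2.2.2)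

/-- The Euler–Lagrange equations with time delay for the Lagrangian `L`. -/
def ELdelay {n : ℕ} (L : Lag n) (t₁ t₂ τ : ℝ) (q : ℝ → Vec n) : Prop :=
  (∀ t ∈ Icc t₁ (t₂ - τ),
      deriv (fun s => dL3 L τ q s + dL5 L τ q (s + τ)) t
        = dL2 L τ q t + dL4 L τ q (t + τ)) ∧
  (∀ t ∈ Icc (t₂ - τ) t₂,
      deriv (fun s => dL3 L τ q s) t = dL2 L τ q t)

/-- Admissibility: `q` is `C²`, coincides with `δ` on `[t₁-τ, t₁]` and satisfies
`q(t₂) = q_{t₂}`. -/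
def Admissible {n : ℕ} (t₁ t₂ τ : ℝ) (δ : ℝ → Vec n) (qt2 : Vec n)
    (q : ℝ → Vec n) : Prop :=
  ContDiff ℝ 2 q ∧ (∀ t ∈ Icc (t₁ - τ) t₁, q t = δ t) ∧ q t₂ = qt2

/-!
Perturbing the minimizer `q` by `ε • η`, with `η` smooth and supported in `(t₁, t₂)`, keeps it
admissible, so the first variation `d/dε J^τ[q + ε η] |_{ε=0}` vanishes. After the substitution
`s = t - τ` in the delayed terms, for `η` supported in `(t₁, t₂ - τ)` the first variation is
`∫ ⟪∂₂L + ∂₄L(· + τ), η⟫ + ⟪∂₃L + ∂₅L(· + τ), η̇⟫`, while for `η` supported in `(t₂ - τ, t₂)` the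
delayed terms drop out because `η (t - τ) = 0` for `t ≤ t₂`. The du Bois-Reymond lemma (integration
by parts followed by the fundamental lemma of the calculus of variations) turns each of these
weak equations into the pointwise one.
-/

open scoped ContDiff
open Function Metric

section TestFunctions

variable {E : Type*} [NormedAddCommGroup E] [InnerProductSpace ℝ E] {a b : ℝ}

theorem support_inner_add_inner_deriv_subset (R G η : ℝ → E) :
    support (fun t => ⟪R t, η t⟫ + ⟪G t, deriv η t⟫) ⊆ tsupport η := by
  intro t ht
  by_contra hη
  have hη' : deriv η t = 0 := notMem_support.mp fun h => hη (support_deriv_subset h)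
  exact ht (by simp [image_eq_zero_of_notMem_tsupport hη, hη'])

theorem continuous_inner_add_inner_deriv {R G η : ℝ → E} (hR : Continuous R) (hG : Continuous G)
    (hη : ContDiff ℝ 1 η) : Continuous fun t => ⟪R t, η t⟫ + ⟪G t, deriv η t⟫ :=
  (hR.inner hη.continuous).add (hG.inner (hη.continuous_deriv le_rfl))

theorem eqOn_zero_of_forall_intervalIntegral_inner_eq_zero [CompleteSpace E] {f : ℝ → E}
    (hf : Continuous f) (hab : a < b)
    (h : ∀ η : ℝ → E, ContDiff ℝ ∞ η → tsupport η ⊆ Ioo a b → ∫ t in a..b, ⟪f t, η t⟫ = 0) :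
    EqOn f 0 (Icc a b) := by
  have hae : ∀ᵐ t, t ∈ Ioo a b → f t = 0 := by
    refine isOpen_Ioo.ae_eq_zero_of_integral_contDiff_smul_eq_zero
      (hf.locallyIntegrable.locallyIntegrableOn _) fun g hg hgc hgU => ?_
    refine integral_eq_zero_of_forall_integral_inner_eq_zero ℝ _
      ((hg.continuous.smul hf).integrable_of_hasCompactSupport hgc.smul_right) fun c => ?_
    have hsupp : support (fun t => ⟪c, g t • f t⟫) ⊆ Ioc a b := fun t ht =>
      Ioo_subset_Ioc_self (hgU (subset_tsupport _ fun hg0 => ht (by simp [hg0])))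
    rw [← intervalIntegral.integral_eq_integral_of_support_subset hsupp]
    simpa [real_inner_smul_left, real_inner_smul_right, real_inner_comm] using
      h (fun t => g t • c) (hg.smul contDiff_const) ((tsupport_smul_subset_left _ _).trans hgU)
  have hIoo : EqOn f 0 (Ioo a b) :=
    Measure.eqOn_open_of_ae_eq ((ae_restrict_iff' measurableSet_Ioo).mpr hae) isOpen_Ioo
      hf.continuousOn continuousOn_const
  simpa [closure_Ioo hab.ne] using hIoo.closure hf continuous_const

theorem eqOn_deriv_of_forall_intervalIntegral_inner_eq_zero [CompleteSpace E] {G R : ℝ → E}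
    (hG : ContDiff ℝ 1 G) (hR : Continuous R) (hab : a < b)
    (h : ∀ η : ℝ → E, ContDiff ℝ ∞ η → tsupport η ⊆ Ioo a b →
      ∫ t in a..b, ⟪R t, η t⟫ + ⟪G t, deriv η t⟫ = 0) :
    EqOn (deriv G) R (Icc a b) := by
  have hG' : Continuous (deriv G) := hG.continuous_deriv le_rfl
  refine fun t ht => sub_eq_zero.mp <|
    eqOn_zero_of_forall_intervalIntegral_inner_eq_zero (hG'.sub hR) hab (fun η hη hηU => ?_) ht
  have hη' : Continuous (deriv η) := hη.continuous_deriv (by simp)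
  have hηab : η a = 0 ∧ η b = 0 :=
    ⟨image_eq_zero_of_notMem_tsupport fun ha => (hηU ha).1.false,
      image_eq_zero_of_notMem_tsupport fun hb => (hηU hb).2.false⟩
  -- the integrand is the derivative of `⟪G, η⟫`, which vanishes at `a` and `b`
  have hparts : ∫ t in a..b, ⟪G t, deriv η t⟫ + ⟪deriv G t, η t⟫ = 0 := by
    rw [intervalIntegral.integral_eq_sub_of_hasDerivAt (f := fun t => ⟪G t, η t⟫)
      (fun t _ => ((hG.differentiable one_ne_zero t).hasDerivAt).inner ℝ
        ((hη.differentiable (by simp) t).hasDerivAt))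
      (((hG.continuous.inner hη').add (hG'.inner hη.continuous)).intervalIntegrable _ _)]
    simp [hηab]
  calc ∫ t in a..b, ⟪(deriv G - R) t, η t⟫
      = (∫ t in a..b, ⟪G t, deriv η t⟫ + ⟪deriv G t, η t⟫)
          - ∫ t in a..b, ⟪R t, η t⟫ + ⟪G t, deriv η t⟫ := by
        rw [← intervalIntegral.integral_sub
          (((hG.continuous.inner hη').add (hG'.inner hη.continuous)).intervalIntegrable _ _)
          (((hR.inner hη.continuous).add (hG.continuous.inner hη')).intervalIntegrable _ _)]
        refine intervalIntegral.integral_congr fun t _ => ?_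
        simp only [Pi.sub_apply, inner_sub_left]
        ring
    _ = 0 := by rw [hparts, h η hη hηU, sub_zero]

end TestFunctions

theorem hasDerivAt_intervalIntegral_of_continuous {E : Type*} [NormedAddCommGroup E]
    [NormedSpace ℝ E] {F F' : ℝ → ℝ → E} {a b x₀ : ℝ} (hF : Continuous (uncurry F))
    (hF' : Continuous (uncurry F')) (hFF' : ∀ x t, HasDerivAt (F · t) (F' x t) x) :
    HasDerivAt (fun x => ∫ t in a..b, F x t) (∫ t in a..b, F' x₀ t) x₀ := by
  obtain ⟨C, hC⟩ := (isCompact_closedBall x₀ 1 |>.prod isCompact_uIcc).exists_bound_of_continuousOn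
    (s := closedBall x₀ 1 ×ˢ uIcc a b) hF'.continuousOn
  refine (intervalIntegral.hasDerivAt_integral_of_dominated_loc_of_deriv_le (bound := fun _ => C)
    (ball_mem_nhds x₀ one_pos)
    (.of_forall fun x => (hF.comp (Continuous.prodMk_right x)).aestronglyMeasurable)
    ((hF.comp (Continuous.prodMk_right x₀)).intervalIntegrable _ _)
    (hF'.comp (Continuous.prodMk_right x₀)).aestronglyMeasurable
    (.of_forall fun t ht x hx => hC (x, t) ⟨ball_subset_closedBall hx, uIoc_subset_uIcc ht⟩)
    intervalIntegrable_const (.of_forall fun t _ x _ => hFF' x t)).2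

theorem gradient_comp_of_hasFDerivAt {E F : Type*} [NormedAddCommGroup E]
    [InnerProductSpace ℝ E] [CompleteSpace E] [NormedAddCommGroup F] [NormedSpace ℝ F]
    {f : F → ℝ} {g : E → F} {g' : E →L[ℝ] F} {x : E}
    (hf : DifferentiableAt ℝ f (g x)) (hg : HasFDerivAt g g' x) :
    gradient (f ∘ g) x = (InnerProductSpace.toDual ℝ E).symm ((fderiv ℝ f (g x)).comp g') := by
  rw [gradient, (hf.hasFDerivAt.comp x hg).fderiv]

namespace TimeDelay

variable {n : ℕ}

abbrev Phase (n : ℕ) := ℝ × Vec n × Vec n × Vec n × Vec n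

def uncurryLag (L : Lag n) : Phase n → ℝ := fun p => L p.1 p.2.1 p.2.2.1 p.2.2.2.1 p.2.2.2.2

def stateJet (τ : ℝ) (q : ℝ → Vec n) (t : ℝ) : Vec n × Vec n × Vec n × Vec n :=
  (q t, deriv q t, q (t - τ), deriv q (t - τ))

def jet (τ : ℝ) (q : ℝ → Vec n) (t : ℝ) : Phase n := (t, stateJet τ q t)

def jetVariation (τ : ℝ) (η : ℝ → Vec n) (t : ℝ) : Phase n := (0, stateJet τ η t)

def firstVariation (L : Lag n) (t₁ t₂ τ : ℝ) (q η : ℝ → Vec n) : ℝ :=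
  ∫ t in t₁..t₂, fderiv ℝ (uncurryLag L) (jet τ q t) (jetVariation τ η t)

-- `ιₖ` inserts a vector as the `k`-th argument of `L` (the first one being time), as in `∂ₖL`.
def ι₂ : Vec n →L[ℝ] Phase n := (0 : Vec n →L[ℝ] ℝ).prod ((ContinuousLinearMap.id ℝ _).prod 0)

def ι₃ : Vec n →L[ℝ] Phase n :=
  (0 : Vec n →L[ℝ] ℝ).prod ((0 : Vec n →L[ℝ] Vec n).prod ((ContinuousLinearMap.id ℝ _).prod 0))

def ι₄ : Vec n →L[ℝ] Phase n :=
  (0 : Vec n →L[ℝ] ℝ).prod ((0 : Vec n →L[ℝ] Vec n).prod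
    ((0 : Vec n →L[ℝ] Vec n).prod ((ContinuousLinearMap.id ℝ _).prod 0)))

def ι₅ : Vec n →L[ℝ] Phase n :=
  (0 : Vec n →L[ℝ] ℝ).prod ((0 : Vec n →L[ℝ] Vec n).prod
    ((0 : Vec n →L[ℝ] Vec n).prod ((0 : Vec n →L[ℝ] Vec n).prod (ContinuousLinearMap.id ℝ _))))

def partialGradient (L : Lag n) (ι : Vec n →L[ℝ] Phase n) (p : Phase n) : Vec n :=
  (InnerProductSpace.toDual ℝ (Vec n)).symm ((fderiv ℝ (uncurryLag L) p).comp ι)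

variable {L : Lag n} {τ : ℝ} {q η : ℝ → Vec n}

theorem dL2_eq (hL : LagC2 L) : dL2 L τ q = fun t => partialGradient L ι₂ (jet τ q t) :=
  funext fun t => gradient_comp_of_hasFDerivAt (f := uncurryLag L)
    (g := fun y => (t, y, deriv q t, q (t - τ), deriv q (t - τ)))
    (hL.differentiable (by simp)).differentiableAt
    ((hasFDerivAt_const _ _).prodMk ((hasFDerivAt_id _).prodMk (hasFDerivAt_const _ _)))

theorem dL3_eq (hL : LagC2 L) : dL3 L τ q = fun t => partialGradient L ι₃ (jet τ q t) :=
  funext fun t => gradient_comp_of_hasFDerivAt (f := uncurryLag L)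
    (g := fun v => (t, q t, v, q (t - τ), deriv q (t - τ)))
    (hL.differentiable (by simp)).differentiableAt
    ((hasFDerivAt_const _ _).prodMk ((hasFDerivAt_const _ _).prodMk
      ((hasFDerivAt_id _).prodMk (hasFDerivAt_const _ _))))

theorem dL4_eq (hL : LagC2 L) : dL4 L τ q = fun t => partialGradient L ι₄ (jet τ q t) :=
  funext fun t => gradient_comp_of_hasFDerivAt (f := uncurryLag L)
    (g := fun y => (t, q t, deriv q t, y, deriv q (t - τ)))
    (hL.differentiable (by simp)).differentiableAt
    ((hasFDerivAt_const _ _).prodMk ((hasFDerivAt_const _ _).prodMk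
      ((hasFDerivAt_const _ _).prodMk ((hasFDerivAt_id _).prodMk (hasFDerivAt_const _ _)))))

theorem dL5_eq (hL : LagC2 L) : dL5 L τ q = fun t => partialGradient L ι₅ (jet τ q t) :=
  funext fun t => gradient_comp_of_hasFDerivAt (f := uncurryLag L)
    (g := fun v => (t, q t, deriv q t, q (t - τ), v))
    (hL.differentiable (by simp)).differentiableAt
    ((hasFDerivAt_const _ _).prodMk ((hasFDerivAt_const _ _).prodMk
      ((hasFDerivAt_const _ _).prodMk ((hasFDerivAt_const _ _).prodMk (hasFDerivAt_id _)))))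

theorem fderiv_uncurryLag_jetVariation (hL : LagC2 L) (t : ℝ) :
    fderiv ℝ (uncurryLag L) (jet τ q t) (jetVariation τ η t)
      = ⟪dL2 L τ q t, η t⟫ + ⟪dL3 L τ q t, deriv η t⟫
        + ⟪dL4 L τ q t, η (t - τ)⟫ + ⟪dL5 L τ q t, deriv η (t - τ)⟫ := by
  have hsplit : jetVariation τ η t
      = ι₂ (η t) + ι₃ (deriv η t) + ι₄ (η (t - τ)) + ι₅ (deriv η (t - τ)) := by
    simp [jetVariation, stateJet, ι₂, ι₃, ι₄, ι₅]
  simp only [dL2_eq hL, dL3_eq hL, dL4_eq hL, dL5_eq hL, partialGradient,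
    InnerProductSpace.toDual_symm_apply, ContinuousLinearMap.comp_apply, hsplit, map_add]

theorem contDiff_stateJet (hq : ContDiff ℝ 2 q) : ContDiff ℝ 1 (stateJet τ q) := by
  have hq' : ContDiff ℝ 1 (deriv q) := (show ContDiff ℝ (1 + 1) q from hq).deriv'
  have hq1 : ContDiff ℝ 1 q := hq.of_le (by norm_num)
  have hshift : ContDiff ℝ 1 (fun t : ℝ => t - τ) := contDiff_id.sub contDiff_const
  exact hq1.prodMk (hq'.prodMk ((hq1.comp hshift).prodMk (hq'.comp hshift)))

theorem contDiff_jet (hq : ContDiff ℝ 2 q) : ContDiff ℝ 1 (jet τ q) :=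
  contDiff_id.prodMk (contDiff_stateJet hq)

theorem contDiff_jetVariation (hη : ContDiff ℝ 2 η) : ContDiff ℝ 1 (jetVariation τ η) :=
  contDiff_const.prodMk (contDiff_stateJet hη)

theorem contDiff_partialGradient (hL : LagC2 L) (ι : Vec n →L[ℝ] Phase n) {c : ℝ → Phase n}
    (hc : ContDiff ℝ 1 c) : ContDiff ℝ 1 fun t => partialGradient L ι (c t) :=
  (InnerProductSpace.toDual ℝ (Vec n)).symm.toContinuousLinearEquiv.contDiff.comp
    (((hL.fderiv_right (m := 1) (by norm_num)).comp hc).clm_comp contDiff_const)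

theorem contDiff_dL2 (hL : LagC2 L) (hq : ContDiff ℝ 2 q) : ContDiff ℝ 1 (dL2 L τ q) := by
  rw [dL2_eq hL]; exact contDiff_partialGradient hL ι₂ (contDiff_jet hq)

theorem contDiff_dL3 (hL : LagC2 L) (hq : ContDiff ℝ 2 q) : ContDiff ℝ 1 (dL3 L τ q) := by
  rw [dL3_eq hL]; exact contDiff_partialGradient hL ι₃ (contDiff_jet hq)

theorem contDiff_dL4 (hL : LagC2 L) (hq : ContDiff ℝ 2 q) : ContDiff ℝ 1 (dL4 L τ q) := by
  rw [dL4_eq hL]; exact contDiff_partialGradient hL ι₄ (contDiff_jet hq)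

theorem contDiff_dL5 (hL : LagC2 L) (hq : ContDiff ℝ 2 q) : ContDiff ℝ 1 (dL5 L τ q) := by
  rw [dL5_eq hL]; exact contDiff_partialGradient hL ι₅ (contDiff_jet hq)

theorem stateJet_add_smul (hq : Differentiable ℝ q) (hη : Differentiable ℝ η) (ε t : ℝ) :
    stateJet τ (q + ε • η) t = stateJet τ q t + ε • stateJet τ η t := by
  have hderiv (s : ℝ) : deriv (q + ε • η) s = deriv q s + ε • deriv η s := by
    rw [deriv_add (hq s) ((hη s).const_smul ε), deriv_const_smul _ (hη s)]
  simp [stateJet, hderiv]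

theorem jet_add_smul (hq : Differentiable ℝ q) (hη : Differentiable ℝ η) (ε t : ℝ) :
    jet τ (q + ε • η) t = jet τ q t + ε • jetVariation τ η t := by
  simp [jet, jetVariation, stateJet_add_smul hq hη]

theorem hasDerivAt_Jτ_add_smul (hL : LagC2 L) (hq : ContDiff ℝ 2 q) (hη : ContDiff ℝ 2 η)
    (t₁ t₂ : ℝ) :
    HasDerivAt (fun ε : ℝ => Jτ L t₁ t₂ τ (q + ε • η)) (firstVariation L t₁ t₂ τ q η) 0 := by
  have hJ : (fun ε : ℝ => Jτ L t₁ t₂ τ (q + ε • η))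
      = fun ε => ∫ t in t₁..t₂, uncurryLag L (jet τ q t + ε • jetVariation τ η t) :=
    funext fun ε => intervalIntegral.integral_congr fun t _ => congrArg (uncurryLag L)
      (jet_add_smul (hq.differentiable (by simp)) (hη.differentiable (by simp)) ε t)
  have hpath : Continuous fun p : ℝ × ℝ => jet τ q p.2 + p.1 • jetVariation τ η p.2 :=
    ((contDiff_jet hq).continuous.comp continuous_snd).add
      (continuous_fst.smul ((contDiff_jetVariation hη).continuous.comp continuous_snd))
  have hderiv (ε t : ℝ) :
      HasDerivAt (fun ε : ℝ => uncurryLag L (jet τ q t + ε • jetVariation τ η t))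
        (fderiv ℝ (uncurryLag L) (jet τ q t + ε • jetVariation τ η t) (jetVariation τ η t)) ε :=
    (hL.differentiable (by simp) _).hasFDerivAt.comp_hasDerivAt ε
      (by simpa using ((hasDerivAt_id ε).smul_const (jetVariation τ η t)).const_add (jet τ q t))
  rw [hJ]
  simpa [firstVariation] using hasDerivAt_intervalIntegral_of_continuous (x₀ := 0)
    (F := fun ε t => uncurryLag L (jet τ q t + ε • jetVariation τ η t))
    (F' := fun ε t => fderiv ℝ (uncurryLag L) (jet τ q t + ε • jetVariation τ η t)
      (jetVariation τ η t))
    (hL.continuous.comp hpath)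
    (((hL.continuous_fderiv (by simp)).comp hpath).clm_apply
      ((contDiff_jetVariation hη).continuous.comp continuous_snd))
    hderiv

theorem firstVariation_eq_zero_of_minimizer (hL : LagC2 L) {t₁ t₂ : ℝ} {δ : ℝ → Vec n}
    {qt2 : Vec n} (hq : Admissible t₁ t₂ τ δ qt2 q)
    (hmin : ∀ q' : ℝ → Vec n, Admissible t₁ t₂ τ δ qt2 q' →
      Jτ L t₁ t₂ τ q ≤ Jτ L t₁ t₂ τ q')
    (hη : ContDiff ℝ 2 η) (hη₁ : ∀ t ∈ Icc (t₁ - τ) t₁, η t = 0) (hη₂ : η t₂ = 0) :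
    firstVariation L t₁ t₂ τ q η = 0 := by
  obtain ⟨hq, hqδ, hqt2⟩ := hq
  have hadm (ε : ℝ) : Admissible t₁ t₂ τ δ qt2 (q + ε • η) :=
    ⟨hq.add (hη.const_smul ε), fun t ht => by simp [hη₁ t ht, hqδ t ht], by simp [hη₂, hqt2]⟩
  have hlocal : IsLocalMin (fun ε : ℝ => Jτ L t₁ t₂ τ (q + ε • η)) 0 :=
    .of_forall fun ε => by simpa using hmin _ (hadm ε)
  exact hlocal.hasDerivAt_eq_zero (hasDerivAt_Jτ_add_smul hL hq hη t₁ t₂)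

theorem firstVariation_eq_add_integral_shift (hL : LagC2 L) (hq : ContDiff ℝ 2 q)
    (hη : ContDiff ℝ 2 η) (t₁ t₂ : ℝ) :
    firstVariation L t₁ t₂ τ q η
      = (∫ t in t₁..t₂, ⟪dL2 L τ q t, η t⟫ + ⟪dL3 L τ q t, deriv η t⟫)
        + ∫ s in (t₁ - τ)..(t₂ - τ),
            ⟪dL4 L τ q (s + τ), η s⟫ + ⟪dL5 L τ q (s + τ), deriv η s⟫ := by
  have hshift : ContDiff ℝ 1 fun s : ℝ => s + τ := contDiff_id.add contDiff_const
  have hη1 : ContDiff ℝ 1 η := hη.of_le (by norm_num)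
  rw [← intervalIntegral.integral_comp_sub_right
      (fun s => ⟪dL4 L τ q (s + τ), η s⟫ + ⟪dL5 L τ q (s + τ), deriv η s⟫),
    ← intervalIntegral.integral_add
      ((continuous_inner_add_inner_deriv (contDiff_dL2 hL hq).continuous
        (contDiff_dL3 hL hq).continuous hη1).intervalIntegrable _ _)
      (((continuous_inner_add_inner_deriv (R := fun s => dL4 L τ q (s + τ))
        (G := fun s => dL5 L τ q (s + τ)) ((contDiff_dL4 hL hq).comp hshift).continuous
        ((contDiff_dL5 hL hq).comp hshift).continuous hη1).comp'
          (continuous_sub_right τ)).intervalIntegrable _ _)]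
  refine intervalIntegral.integral_congr fun t _ => ?_
  simp only [fderiv_uncurryLag_jetVariation hL, sub_add_cancel]
  ring

theorem firstVariation_eq_of_tsupport_subset_left (hL : LagC2 L) (hq : ContDiff ℝ 2 q)
    (hη : ContDiff ℝ 2 η) {t₁ t₂ : ℝ} (hτ : 0 ≤ τ) (hU : tsupport η ⊆ Ioo t₁ (t₂ - τ)) :
    firstVariation L t₁ t₂ τ q η
      = ∫ t in t₁..(t₂ - τ), ⟪dL2 L τ q t + dL4 L τ q (t + τ), η t⟫
          + ⟪dL3 L τ q t + dL5 L τ q (t + τ), deriv η t⟫ := by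
  have hshift : ContDiff ℝ 1 fun s : ℝ => s + τ := contDiff_id.add contDiff_const
  have hη1 : ContDiff ℝ 1 η := hη.of_le (by norm_num)
  have hA := (support_inner_add_inner_deriv_subset (dL2 L τ q) (dL3 L τ q) η).trans hU
  have hB := (support_inner_add_inner_deriv_subset (fun s => dL4 L τ q (s + τ))
    (fun s => dL5 L τ q (s + τ)) η).trans hU
  rw [firstVariation_eq_add_integral_shift hL hq hη,
    intervalIntegral.integral_eq_integral_of_support_subset
      (hA.trans (Ioo_subset_Ioc_self.trans (Ioc_subset_Ioc_right (by linarith)))),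
    intervalIntegral.integral_eq_integral_of_support_subset
      (hB.trans (Ioo_subset_Ioc_self.trans (Ioc_subset_Ioc_left (by linarith)))),
    ← intervalIntegral.integral_eq_integral_of_support_subset (hA.trans Ioo_subset_Ioc_self),
    ← intervalIntegral.integral_eq_integral_of_support_subset (hB.trans Ioo_subset_Ioc_self),
    ← intervalIntegral.integral_add
      ((continuous_inner_add_inner_deriv (contDiff_dL2 hL hq).continuous
        (contDiff_dL3 hL hq).continuous hη1).intervalIntegrable _ _)
      ((continuous_inner_add_inner_deriv (R := fun s => dL4 L τ q (s + τ))
        (G := fun s => dL5 L τ q (s + τ)) ((contDiff_dL4 hL hq).comp hshift).continuous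
        ((contDiff_dL5 hL hq).comp hshift).continuous hη1).intervalIntegrable _ _)]
  simp only [inner_add_left]
  refine intervalIntegral.integral_congr fun t _ => by ring

theorem firstVariation_eq_of_tsupport_subset_right (hL : LagC2 L) (hq : ContDiff ℝ 2 q)
    (hη : ContDiff ℝ 2 η) {t₁ t₂ : ℝ} (hτ : 0 ≤ τ) (ht : t₁ ≤ t₂ - τ)
    (hU : tsupport η ⊆ Ioo (t₂ - τ) t₂) :
    firstVariation L t₁ t₂ τ q η
      = ∫ t in (t₂ - τ)..t₂, ⟪dL2 L τ q t, η t⟫ + ⟪dL3 L τ q t, deriv η t⟫ := by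
  have hA := (support_inner_add_inner_deriv_subset (dL2 L τ q) (dL3 L τ q) η).trans hU
  have hB := (support_inner_add_inner_deriv_subset (fun s => dL4 L τ q (s + τ))
    (fun s => dL5 L τ q (s + τ)) η).trans hU
  have hB0 : ∫ s in (t₁ - τ)..(t₂ - τ),
      ⟪dL4 L τ q (s + τ), η s⟫ + ⟪dL5 L τ q (s + τ), deriv η s⟫ = 0 := by
    refine intervalIntegral.integral_zero_ae (.of_forall fun s hs => ?_)
    by_contra h
    rw [uIoc_of_le (by linarith)] at hs
    exact (hB h).1.not_ge hs.2
  rw [firstVariation_eq_add_integral_shift hL hq hη, hB0, add_zero,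
    intervalIntegral.integral_eq_integral_of_support_subset
      (hA.trans (Ioo_subset_Ioc_self.trans (Ioc_subset_Ioc_left (by linarith)))),
    ← intervalIntegral.integral_eq_integral_of_support_subset (hA.trans Ioo_subset_Ioc_self)]

end TimeDelay

open TimeDelay in
theorem euler_lagrange_with_time_delay_general
    {n : ℕ} (t₁ t₂ τ : ℝ) (hτ : 0 < τ)
    (hτ' : τ < t₂ - t₁) (L : Lag n) (hL : LagC2 L)
    (δ : ℝ → Vec n) (qt2 : Vec n) (q : ℝ → Vec n)
    (hq : Admissible t₁ t₂ τ δ qt2 q)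
    (hmin : ∀ q' : ℝ → Vec n, Admissible t₁ t₂ τ δ qt2 q' →
      Jτ L t₁ t₂ τ q ≤ Jτ L t₁ t₂ τ q') :
    ELdelay L t₁ t₂ τ q := by
  have hshift : ContDiff ℝ 1 fun s : ℝ => s + τ := contDiff_id.add contDiff_const
  have hvanish {a b : ℝ} (η : ℝ → Vec n) (ha : t₁ ≤ a) (hb : b ≤ t₂) (hη : ContDiff ℝ 2 η)
      (hU : tsupport η ⊆ Ioo a b) : firstVariation L t₁ t₂ τ q η = 0 :=
    firstVariation_eq_zero_of_minimizer hL hq hmin hη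
      (fun t ht => image_eq_zero_of_notMem_tsupport fun h => (ht.2.trans ha).not_gt (hU h).1)
      (image_eq_zero_of_notMem_tsupport fun h => hb.not_gt (hU h).2)
  constructor
  · refine fun t ht => eqOn_deriv_of_forall_intervalIntegral_inner_eq_zero
      (G := fun s => dL3 L τ q s + dL5 L τ q (s + τ))
      (R := fun s => dL2 L τ q s + dL4 L τ q (s + τ))
      ((contDiff_dL3 hL hq.1).add ((contDiff_dL5 hL hq.1).comp hshift))
      ((contDiff_dL2 hL hq.1).continuous.add ((contDiff_dL4 hL hq.1).comp hshift).continuous)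
      (by linarith) (fun η hη hU => ?_) ht
    have hη2 : ContDiff ℝ 2 η := hη.of_le ENat.LEInfty.out
    rw [← firstVariation_eq_of_tsupport_subset_left hL hq.1 hη2 hτ.le hU]
    exact hvanish η le_rfl (by linarith) hη2 hU
  · refine fun t ht => eqOn_deriv_of_forall_intervalIntegral_inner_eq_zero
      (contDiff_dL3 hL hq.1) (contDiff_dL2 hL hq.1).continuous (by linarith)
      (fun η hη hU => ?_) ht
    have hη2 : ContDiff ℝ 2 η := hη.of_le ENat.LEInfty.out
    rw [← firstVariation_eq_of_tsupport_subset_right hL hq.1 hη2 hτ.le (by linarith) hU]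
    exact hvanish η (by linarith) le_rfl hη2 hU

/-- a `C²` minimizer of the delayed functional `J^τ` satisfies the
Euler–Lagrange equations with time delay. -/
theorem euler_lagrange_with_time_delay
    {n : ℕ} (hn : 0 < n) (t₁ t₂ τ : ℝ) (ht : t₁ < t₂) (hτ : 0 < τ)
    (hτ' : τ < t₂ - t₁) (L : Lag n) (hL : LagC2 L)
    (δ : ℝ → Vec n) (qt2 : Vec n) (q : ℝ → Vec n)
    (hq : Admissible t₁ t₂ τ δ qt2 q)
    (hmin : ∀ q' : ℝ → Vec n, Admissible t₁ t₂ τ δ qt2 q' →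
      Jτ L t₁ t₂ τ q ≤ Jτ L t₁ t₂ τ q') :
    ELdelay L t₁ t₂ τ q :=
  euler_lagrange_with_time_delay_general t₁ t₂ τ hτ hτ' L hL δ qt2 q hq hmin

end
end

section
/- Let λ ∈ ℝ and let q : [t₁−τ,t₂] → ℝⁿ be a C² isoperimetric extremal with time delay, i.e. q satisfies the isoperimetric Euler–Lagrange equations with time delay for the augmented Lagrangian F = L − λ·g: d/dt(∂₃F[q,λ]_τ(t) + ∂₅F[q,λ]_τ(t+τ)) = ∂₂F[q,λ]_τ(t) + ∂₄F[q,λ]_τ(t+τ) on [t₁,t₂−τ], and d/dt ∂₃F[q,λ]_τ(t) = ∂₂F[q,λ]_τ(t) on [t₂−τ,t₂]. Suppose moreover that ∂₄F[q,λ]_τ(t+τ)·q̇(t) + ∂₅F[q,λ]_τ(t+τ)·q̈(t) = 0 for all t ∈ [t₁−τ, t₂−τ]. Then q satisfies the isoperimetric DuBois–Reymond conditions with time delay: d/dt{F[q,λ]_τ(t) − q̇(t)·(∂₃F[q,λ]_τ(t) + ∂₅F[q,λ]_τ(t+τ))} = ∂₁F[q,λ]_τ(t) for all t ∈ [t₁,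 t₂−τ], and d/dt{F[q,λ]_τ(t) − q̇(t)·∂₃F[q,λ]_τ(t)} = ∂₁F[q,λ]_τ(t) for all t ∈ [t₂−τ, t₂]. -/
/-!
Along the trajectory, `d/dt F[q]_τ(t) = ∂₁F + ∂₂F·q̇(t) + ∂₃F·q̈(t) + ∂₄F·q̇(t-τ) + ∂₅F·q̈(t-τ)`.
Subtracting `d/dt (q̇·P)`, where `P` is the momentum of the Euler–Lagrange equation
(`∂₃F + ∂₅F(·+τ)` on `[t₁, t₂-τ]`, `∂₃F` on `[t₂-τ, t₂]`), cancels the `∂₂F` and `∂₃F` terms.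
What remains besides `∂₁F` is the delay term of the hypothesis at `t - τ`, minus the same term
at `t` on the first interval; both vanish. The isoperimetric statement is the case
`F = L - λ g`, which is again `C²`.
-/

open Set MeasureTheory RealInnerProductSpace

noncomputable section

/-- The augmented Lagrangian `F = L - λ·g`. -/
def Aug {n : ℕ} (L g : Lag n) (lam : ℝ) : Lag n :=
  fun t a b c d => L t a b c d - lam * g t a b c d

theorem inner_gradient_comp_eq_fderiv {E F : Type*} [NormedAddCommGroup E] [NormedSpace ℝ E]
    [NormedAddCommGroup F] [InnerProductSpace ℝ F] [CompleteSpace F]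
    {U : E → ℝ} {e : F → E} {ℓ : F →L[ℝ] E} {x : F}
    (he : HasFDerivAt e ℓ x) (hU : DifferentiableAt ℝ U (e x)) (h : F) :
    ⟪gradient (U ∘ e) x, h⟫ = fderiv ℝ U (e x) (ℓ h) := by
  rw [inner_gradient_left, (hU.hasFDerivAt.comp x he).fderiv]
  rfl

theorem EuclideanSpace.differentiableAt_of_inner {ι E : Type*} [Fintype ι]
    [NormedAddCommGroup E] [NormedSpace ℝ E] {f : E → EuclideanSpace ℝ ι} {x : E}
    (h : ∀ v, DifferentiableAt ℝ (fun y => ⟪f y, v⟫) x) : DifferentiableAt ℝ f x := by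
  classical
  refine differentiableAt_euclidean.mpr fun i => ?_
  simpa [EuclideanSpace.inner_single_right] using h (EuclideanSpace.single i 1)

variable {n : ℕ}

abbrev Jet (n : ℕ) := ℝ × Vec n × Vec n × Vec n × Vec n

def lagUncurry (F : Lag n) (p : Jet n) : ℝ :=
  F p.1 p.2.1 p.2.2.1 p.2.2.2.1 p.2.2.2.2

def delayJet (τ : ℝ) (q : ℝ → Vec n) (t : ℝ) : Jet n :=
  (t, q t, deriv q t, q (t - τ), deriv q (t - τ))

theorem LagC2.contDiff_lagUncurry {F : Lag n} (hF : LagC2 F) : ContDiff ℝ 2 (lagUncurry F) := hF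

theorem LagC2.aug {L g : Lag n} (hL : LagC2 L) (hg : LagC2 g) (lam : ℝ) : LagC2 (Aug L g lam) :=
  hL.sub (contDiff_const.mul hg)

section Partials

variable {F : Lag n} {τ : ℝ} {q : ℝ → Vec n} {t : ℝ}

theorem dL1_eq_fderiv (hF : DifferentiableAt ℝ (lagUncurry F) (delayJet τ q t)) :
    dL1 F τ q t = fderiv ℝ (lagUncurry F) (delayJet τ q t) (1, 0, 0, 0, 0) :=
  (hF.hasFDerivAt.comp_hasDerivAt
    (f := fun s => ((s, q t, deriv q t, q (t - τ), deriv q (t - τ)) : Jet n)) t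
    ((hasDerivAt_id t).prodMk ((hasDerivAt_const _ _).prodMk ((hasDerivAt_const _ _).prodMk
      ((hasDerivAt_const _ _).prodMk (hasDerivAt_const _ _)))))).deriv

theorem inner_dL2 (hF : DifferentiableAt ℝ (lagUncurry F) (delayJet τ q t)) (h : Vec n) :
    ⟪dL2 F τ q t, h⟫ = fderiv ℝ (lagUncurry F) (delayJet τ q t) (0, h, 0, 0, 0) := by
  have he : HasFDerivAt (fun v => ((t, v, deriv q t, q (t - τ), deriv q (t - τ)) : Jet n))
      (_ : Vec n →L[ℝ] Jet n) (q t) :=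
    (hasFDerivAt_const _ _).prodMk ((hasFDerivAt_id _).prodMk (hasFDerivAt_const _ _))
  exact inner_gradient_comp_eq_fderiv he hF h

theorem inner_dL3 (hF : DifferentiableAt ℝ (lagUncurry F) (delayJet τ q t)) (h : Vec n) :
    ⟪dL3 F τ q t, h⟫ = fderiv ℝ (lagUncurry F) (delayJet τ q t) (0, 0, h, 0, 0) := by
  have he : HasFDerivAt (fun v => ((t, q t, v, q (t - τ), deriv q (t - τ)) : Jet n))
      (_ : Vec n →L[ℝ] Jet n) (deriv q t) :=
    (hasFDerivAt_const _ _).prodMk ((hasFDerivAt_const _ _).prodMk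
      ((hasFDerivAt_id _).prodMk (hasFDerivAt_const _ _)))
  exact inner_gradient_comp_eq_fderiv he hF h

theorem inner_dL4 (hF : DifferentiableAt ℝ (lagUncurry F) (delayJet τ q t)) (h : Vec n) :
    ⟪dL4 F τ q t, h⟫ = fderiv ℝ (lagUncurry F) (delayJet τ q t) (0, 0, 0, h, 0) := by
  have he : HasFDerivAt (fun v => ((t, q t, deriv q t, v, deriv q (t - τ)) : Jet n))
      (_ : Vec n →L[ℝ] Jet n) (q (t - τ)) :=
    (hasFDerivAt_const _ _).prodMk ((hasFDerivAt_const _ _).prodMk ((hasFDerivAt_const _ _).prodMk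
      ((hasFDerivAt_id _).prodMk (hasFDerivAt_const _ _))))
  exact inner_gradient_comp_eq_fderiv he hF h

theorem inner_dL5 (hF : DifferentiableAt ℝ (lagUncurry F) (delayJet τ q t)) (h : Vec n) :
    ⟪dL5 F τ q t, h⟫ = fderiv ℝ (lagUncurry F) (delayJet τ q t) (0, 0, 0, 0, h) := by
  have he : HasFDerivAt (fun v => ((t, q t, deriv q t, q (t - τ), v) : Jet n))
      (_ : Vec n →L[ℝ] Jet n) (deriv q (t - τ)) :=
    (hasFDerivAt_const _ _).prodMk ((hasFDerivAt_const _ _).prodMk ((hasFDerivAt_const _ _).prodMk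
      ((hasFDerivAt_const _ _).prodMk (hasFDerivAt_id _))))
  exact inner_gradient_comp_eq_fderiv he hF h

end Partials

section Trajectory

variable {F : Lag n} {τ : ℝ} {q : ℝ → Vec n}

theorem hasDerivAt_delayJet (hq : Differentiable ℝ q) (hq' : Differentiable ℝ (deriv q)) (t : ℝ) :
    HasDerivAt (delayJet τ q)
      (1, deriv q t, deriv (deriv q) t, deriv q (t - τ), deriv (deriv q) (t - τ)) t := by
  have hdelay {f : ℝ → Vec n} (hf : Differentiable ℝ f) :
      HasDerivAt (fun s => f (s - τ)) (deriv f (t - τ)) t :=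
    (hf (t - τ)).hasDerivAt.comp_sub_const t τ
  exact (hasDerivAt_id t).prodMk ((hq t).hasDerivAt.prodMk ((hq' t).hasDerivAt.prodMk
    ((hdelay hq).prodMk (hdelay hq'))))

theorem hasDerivAt_lagAlong {t : ℝ} (hF : DifferentiableAt ℝ (lagUncurry F) (delayJet τ q t))
    (hq : Differentiable ℝ q) (hq' : Differentiable ℝ (deriv q)) :
    HasDerivAt (lagAlong F τ q)
      (dL1 F τ q t + ⟪dL2 F τ q t, deriv q t⟫ + ⟪dL3 F τ q t, deriv (deriv q) t⟫
        + ⟪dL4 F τ q t, deriv q (t - τ)⟫ + ⟪dL5 F τ q t, deriv (deriv q) (t - τ)⟫) t := by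
  refine (hF.hasFDerivAt.comp_hasDerivAt t (hasDerivAt_delayJet hq hq' t)).congr_deriv ?_
  rw [dL1_eq_fderiv hF, inner_dL2 hF, inner_dL3 hF, inner_dL4 hF, inner_dL5 hF,
    ← map_add, ← map_add, ← map_add, ← map_add]
  simp

theorem differentiable_fderiv_lagUncurry_delayJet (hF : ContDiff ℝ 2 (lagUncurry F))
    (hq : Differentiable ℝ q) (hq' : Differentiable ℝ (deriv q)) (w : Jet n) :
    Differentiable ℝ (fun t => fderiv ℝ (lagUncurry F) (delayJet τ q t) w) := by
  have hjet : Differentiable ℝ (delayJet τ q) := fun t =>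
    (hasDerivAt_delayJet hq hq' t).differentiableAt
  have hdF : Differentiable ℝ (fderiv ℝ (lagUncurry F)) :=
    (hF.fderiv_right le_rfl).differentiable one_ne_zero
  exact fun t => ((hdF.comp hjet) t).clm_apply (differentiableAt_const w)

theorem differentiable_dL3 (hF : ContDiff ℝ 2 (lagUncurry F)) (hq : Differentiable ℝ q)
    (hq' : Differentiable ℝ (deriv q)) :
    Differentiable ℝ (dL3 F τ q) := fun t =>
  EuclideanSpace.differentiableAt_of_inner fun v => by
    simpa only [inner_dL3 (hF.differentiable two_ne_zero _)] using
      differentiable_fderiv_lagUncurry_delayJet (τ := τ) hF hq hq' (0, 0, v, 0, 0) t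

theorem differentiable_dL5 (hF : ContDiff ℝ 2 (lagUncurry F)) (hq : Differentiable ℝ q)
    (hq' : Differentiable ℝ (deriv q)) :
    Differentiable ℝ (dL5 F τ q) := fun t =>
  EuclideanSpace.differentiableAt_of_inner fun v => by
    simpa only [inner_dL5 (hF.differentiable two_ne_zero _)] using
      differentiable_fderiv_lagUncurry_delayJet (τ := τ) hF hq hq' (0, 0, 0, 0, v) t

theorem hasDerivAt_lagAlong_sub_inner {t : ℝ} {P : ℝ → Vec n} {P' : Vec n}
    (hF : DifferentiableAt ℝ (lagUncurry F) (delayJet τ q t))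
    (hq : Differentiable ℝ q) (hq' : Differentiable ℝ (deriv q)) (hP : HasDerivAt P P' t) :
    HasDerivAt (fun s => lagAlong F τ q s - ⟪deriv q s, P s⟫)
      (dL1 F τ q t + ⟪dL2 F τ q t - P', deriv q t⟫ + ⟪dL3 F τ q t - P t, deriv (deriv q) t⟫
        + (⟪dL4 F τ q t, deriv q (t - τ)⟫ + ⟪dL5 F τ q t, deriv (deriv q) (t - τ)⟫)) t := by
  refine ((hasDerivAt_lagAlong hF hq hq').sub ((hq' t).hasDerivAt.inner ℝ hP)).congr_deriv ?_
  rw [inner_sub_left, inner_sub_left, real_inner_comm P', real_inner_comm (P t)]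
  ring

end Trajectory

theorem duBoisReymond_with_time_delay {t₁ t₂ τ : ℝ} (hτ : 0 ≤ τ) (hτ' : τ ≤ t₂ - t₁)
    {F : Lag n} (hF : LagC2 F) {q : ℝ → Vec n} (hq : ContDiff ℝ 2 q)
    (hEL : ELdelay F t₁ t₂ τ q)
    (hcond : ∀ t ∈ Icc (t₁ - τ) (t₂ - τ),
      ⟪dL4 F τ q (t + τ), deriv q t⟫ + ⟪dL5 F τ q (t + τ), deriv (deriv q) t⟫ = 0) :
    (∀ t ∈ Icc t₁ (t₂ - τ),
      deriv (fun s => lagAlong F τ q s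
          - ⟪deriv q s, dL3 F τ q s + dL5 F τ q (s + τ)⟫) t = dL1 F τ q t) ∧
    (∀ t ∈ Icc (t₂ - τ) t₂,
      deriv (fun s => lagAlong F τ q s - ⟪deriv q s, dL3 F τ q s⟫) t = dL1 F τ q t) := by
  obtain ⟨hEL₁, hEL₂⟩ := hEL
  have hF₂ : ContDiff ℝ 2 (lagUncurry F) := hF.contDiff_lagUncurry
  have hF₁ : Differentiable ℝ (lagUncurry F) := hF₂.differentiable two_ne_zero
  have hq₁ : Differentiable ℝ q := hq.differentiable two_ne_zero
  have hq₂ : Differentiable ℝ (deriv q) := hq.differentiable_deriv_two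
  have hdL3 := differentiable_dL3 (τ := τ) hF₂ hq₁ hq₂
  refine ⟨fun t ht => ?_, fun t ht => ?_⟩
  · have hP : DifferentiableAt ℝ (fun s => dL3 F τ q s + dL5 F τ q (s + τ)) t :=
      (hdL3 t).add ((differentiable_dL5 hF₂ hq₁ hq₂ _).comp t (differentiableAt_id.add_const τ))
    have hcond_t := hcond t ⟨by linarith [ht.1], ht.2⟩
    have hcond_delayed := hcond (t - τ) ⟨by linarith [ht.1], by linarith [ht.2]⟩
    rw [sub_add_cancel] at hcond_delayed
    rw [(hasDerivAt_lagAlong_sub_inner (hF₁ _) hq₁ hq₂ hP.hasDerivAt).deriv, hEL₁ t ht,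
      sub_add_cancel_left, sub_add_cancel_left, inner_neg_left, inner_neg_left, hcond_delayed]
    linarith
  · have hcond_delayed := hcond (t - τ) ⟨by linarith [ht.1], by linarith [ht.2]⟩
    rw [sub_add_cancel] at hcond_delayed
    rw [(hasDerivAt_lagAlong_sub_inner (hF₁ _) hq₁ hq₂ (hdL3 t).hasDerivAt).deriv, hEL₂ t ht,
      sub_self, sub_self, inner_zero_left, inner_zero_left, hcond_delayed]
    ring

theorem isoperimetric_duBois_Reymond_with_time_delay_general
    {n : ℕ} (t₁ t₂ τ : ℝ) (hτ : 0 < τ)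
    (hτ' : τ < t₂ - t₁) (L g : Lag n) (hL : LagC2 L) (hg : LagC2 g)
    (lam : ℝ) (q : ℝ → Vec n) (hq : ContDiff ℝ 2 q)
    (hEL : ELdelay (Aug L g lam) t₁ t₂ τ q)
    (hcond : ∀ t ∈ Icc (t₁ - τ) (t₂ - τ),
      ⟪dL4 (Aug L g lam) τ q (t + τ), deriv q t⟫
        + ⟪dL5 (Aug L g lam) τ q (t + τ), deriv (deriv q) t⟫ = 0) :
    (∀ t ∈ Icc t₁ (t₂ - τ),
      deriv (fun s => lagAlong (Aug L g lam) τ q s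
          - ⟪deriv q s, dL3 (Aug L g lam) τ q s + dL5 (Aug L g lam) τ q (s + τ)⟫) t
        = dL1 (Aug L g lam) τ q t) ∧
    (∀ t ∈ Icc (t₂ - τ) t₂,
      deriv (fun s => lagAlong (Aug L g lam) τ q s
          - ⟪deriv q s, dL3 (Aug L g lam) τ q s⟫) t
        = dL1 (Aug L g lam) τ q t) :=
  duBoisReymond_with_time_delay hτ.le hτ'.le (hL.aug hg lam) hq hEL hcond

/-- isoperimetric DuBois–Reymond necessary conditions with time delay
along a `C²` isoperimetric Euler–Lagrange extremal. -/
theorem isoperimetric_duBois_Reymond_with_time_delay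
    {n : ℕ} (hn : 0 < n) (t₁ t₂ τ : ℝ) (ht : t₁ < t₂) (hτ : 0 < τ)
    (hτ' : τ < t₂ - t₁) (L g : Lag n) (hL : LagC2 L) (hg : LagC2 g)
    (lam : ℝ) (q : ℝ → Vec n) (hq : ContDiff ℝ 2 q)
    (hEL : ELdelay (Aug L g lam) t₁ t₂ τ q)
    (hcond : ∀ t ∈ Icc (t₁ - τ) (t₂ - τ),
      ⟪dL4 (Aug L g lam) τ q (t + τ), deriv q t⟫
        + ⟪dL5 (Aug L g lam) τ q (t + τ), deriv (deriv q) t⟫ = 0) :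
    (∀ t ∈ Icc t₁ (t₂ - τ),
      deriv (fun s => lagAlong (Aug L g lam) τ q s
          - ⟪deriv q s, dL3 (Aug L g lam) τ q s + dL5 (Aug L g lam) τ q (s + τ)⟫) t
        = dL1 (Aug L g lam) τ q t) ∧
    (∀ t ∈ Icc (t₂ - τ) t₂,
      deriv (fun s => lagAlong (Aug L g lam) τ q s
          - ⟪deriv q s, dL3 (Aug L g lam) τ q s⟫) t
        = dL1 (Aug L g lam) τ q t) :=
  isoperimetric_duBois_Reymond_with_time_delay_general t₁ t₂ τ hτ hτ' L g hL hg lam q hq hEL hcond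

end
end
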